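/- Let S be an error-correcting identifying code in a cubic graph G and let x ∈ S be a vertex with |N[x] ∩ S| = 3 (i.e., exactly one neighbor of x is outside S). Then both neighbors of x that are in S have |N[·] ∩ S| = 4. -/

import Mathlib

open SimpleGraph

variable {V : Type*}

/-- Closed neighborhood of `v` in `G`. -/
def closedNbhd (G : SimpleGraph V) (v : V) : Set V := insert v (G.neighborSet v)

/-- `S` is an error-correcting identifying code for `G`: every vertex is 3-dominated
and every pair of distinct vertices is 3-distinguished. -/
def IsErrIC (G : SimpleGraph V) (S : Set V) : Prop :=
  (∀ v : V, 3 ≤ (closedNbhd G v ∩ S).ncard) ∧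
  ∀ u v : V, u ≠ v → 3 ≤ (symmDiff (closedNbhd G u ∩ S) (closedNbhd G v ∩ S)).ncard

/-- `G` has no closed twins and no open twins. -/
def TwinFree (G : SimpleGraph V) : Prop :=
  ∀ u v : V, u ≠ v →
    closedNbhd G u ≠ closedNbhd G v ∧ G.neighborSet u ≠ G.neighborSet v

/-!
Adjacent vertices `x, y ∈ S` both lie in `N[x] ∩ S` and `N[y] ∩ S`, so these two sets share at
least two elements and their symmetric difference has at most `|N[x] ∩ S| + |N[y] ∩ S| - 4`
elements. Since it must have at least three, the two sizes add up to at least seven; with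
`|N[x] ∩ S| = 3` and `|N[y] ∩ S| ≤ |N[y]| = 4` this forces `|N[y] ∩ S| = 4`.
-/

theorem Set.ncard_symmDiff_add_two_mul_ncard_inter {α : Type*} {s t : Set α}
    (hs : s.Finite) (ht : t.Finite) :
    (symmDiff s t).ncard + 2 * (s ∩ t).ncard = s.ncard + t.ncard := by
  have hsub : s ∩ t ⊆ s ∪ t := Set.inter_subset_left.trans Set.subset_union_left
  rw [symmDiff_eq_sup_sdiff_inf, ← Set.ncard_union_add_ncard_inter s t hs ht]
  have := Set.ncard_sdiff_add_ncard_of_subset hsub (hs.union ht)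
  simp only [Set.sup_eq_union, Set.inf_eq_inter] at this ⊢
  omega

theorem ncard_closedNbhd {G : SimpleGraph V} {v : V} (hv : (G.neighborSet v).Finite) :
    (closedNbhd G v).ncard = (G.neighborSet v).ncard + 1 :=
  Set.ncard_insert_of_notMem G.notMem_neighborSet_self hv

theorem pair_subset_closedNbhd_inter {G : SimpleGraph V} {x y : V} (hxy : G.Adj x y) :
    {x, y} ⊆ closedNbhd G x ∩ closedNbhd G y := by
  rintro z (rfl | rfl)
  · exact ⟨Set.mem_insert _ _, Set.mem_insert_of_mem _ hxy.symm⟩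
  · exact ⟨Set.mem_insert_of_mem _ hxy, Set.mem_insert _ _⟩

theorem IsErrIC.seven_le_ncard_add_ncard_of_adj {G : SimpleGraph V} {S : Set V}
    (hS : IsErrIC G S) {x y : V} (hxy : G.Adj x y) (hx : x ∈ S) (hy : y ∈ S) :
    7 ≤ (closedNbhd G x ∩ S).ncard + (closedNbhd G y ∩ S).ncard := by
  set A := closedNbhd G x ∩ S
  set B := closedNbhd G y ∩ S
  have hA3 : 3 ≤ A.ncard := hS.1 x
  have hB3 : 3 ≤ B.ncard := hS.1 y
  have hA : A.Finite := Set.finite_of_ncard_pos (by omega)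
  have hB : B.Finite := Set.finite_of_ncard_pos (by omega)
  have hpair : ({x, y} : Set V) ⊆ A ∩ B := by
    intro z hz
    have hzS : z ∈ S := by rcases hz with rfl | rfl <;> assumption
    obtain ⟨hzx, hzy⟩ := pair_subset_closedNbhd_inter hxy hz
    exact ⟨⟨hzx, hzS⟩, ⟨hzy, hzS⟩⟩
  have hinter : 2 ≤ (A ∩ B).ncard := by
    simpa only [Set.ncard_pair (G.ne_of_adj hxy)] using
      Set.ncard_le_ncard hpair (hA.inter_of_left B)
  have hsep : 3 ≤ (symmDiff A B).ncard := hS.2 x y (G.ne_of_adj hxy)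
  have hcount := Set.ncard_symmDiff_add_two_mul_ncard_inter hA hB
  omega

theorem stmt17 (G : SimpleGraph V)
    (hreg : ∀ v : V, (G.neighborSet v).ncard = 3)
    (S : Set V) (hS : IsErrIC G S) (x : V) (hx : x ∈ S)
    (h3 : (closedNbhd G x ∩ S).ncard = 3) :
    ∀ y : V, G.Adj x y → y ∈ S → (closedNbhd G y ∩ S).ncard = 4 := by
  intro y hxy hy
  have hfin : (G.neighborSet y).Finite := Set.finite_of_ncard_ne_zero (by rw [hreg y]; norm_num)
  have hle : (closedNbhd G y ∩ S).ncard ≤ 4 := by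
    have := Set.ncard_inter_le_ncard_left (closedNbhd G y) S (hfin.insert y)
    rwa [ncard_closedNbhd hfin, hreg y] at this
  have hsum := hS.seven_le_ncard_add_ncard_of_adj hxy hx hy
  omega
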